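/- arXiv:1001.0559 — 2 statements merged into one kernel-verified Lean document; each statement's English description precedes it below -/
import Mathlib

section
/- (Denjoy–Wolff) Let f be holomorphic on the open unit disk 𝔻 with |f(z)| < 1 for all z ∈ 𝔻, and suppose f has no fixed point in 𝔻. Then there exists a boundary point α with |α| = 1 such that f contracts every horocycle at α: for all z, w ∈ 𝔻, if (1 − |w|²)/|1 − conj(α)·w|² ≥ (1 − |z|²)/|1 − conj(α)·z|² then (1 − |f(w)|²)/|1 − conj(α)·f(w)|² ≥ (1 − |z|²)/|1 − conj(α)·z|²; in particular (1 − |f(z)|²)/|1 − conj(α)·f(z)|² ≥ (1 − |z|²)/|1 − conj(α)·z|² for every z ∈ 𝔻. -/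
/-!
For `0 < r < 1` the map `r • f` sends the disk into the disk of radius `r`, so it is a strict
contraction for the pseudo-hyperbolic distance and has a fixed point `w_r`. Since
`1 - ρ(z, w)² = (1 - |w|²) · horocycleRatio w z`, Schwarz–Pick says that `r • f` maps every
pseudo-hyperbolic disk about `w_r` into itself. As `r → 1` a subsequence of the `w_r` converges to
some `α` in the closed disk; `α` is not inside, for it would be a fixed point of `f`. In the limit
the disks about `w_r` become horocycles at `α`, and these are mapped into themselves by `f`.
-/

open Complex Metric Set Filter Topology Function ComplexConjugate

theorem norm_one_sub_conj_mul_sq_sub_norm_sub_sq (a b : ℂ) :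
    ‖1 - conj b * a‖ ^ 2 - ‖a - b‖ ^ 2 = (1 - ‖a‖ ^ 2) * (1 - ‖b‖ ^ 2) := by
  simp only [Complex.sq_norm, normSq_apply, sub_re, sub_im, mul_re, mul_im, one_re, one_im,
    conj_re, conj_im]
  ring

theorem norm_conj_mul_lt_one {a b : ℂ} (ha : ‖a‖ < 1) (hb : ‖b‖ ≤ 1) : ‖conj b * a‖ < 1 := by
  rw [norm_mul, norm_conj]
  exact mul_lt_one_of_nonneg_of_lt_one_right hb (norm_nonneg a) ha

theorem one_sub_conj_mul_ne_zero {a b : ℂ} (ha : ‖a‖ < 1) (hb : ‖b‖ ≤ 1) :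
    1 - conj b * a ≠ 0 :=
  sub_ne_zero.2 fun h => by simpa [← h] using norm_conj_mul_lt_one ha hb

theorem norm_one_sub_conj_mul_pos {a b : ℂ} (ha : ‖a‖ < 1) (hb : ‖b‖ ≤ 1) :
    0 < ‖1 - conj b * a‖ :=
  norm_pos_iff.2 (one_sub_conj_mul_ne_zero ha hb)

theorem norm_one_sub_conj_mul_le_two {a b : ℂ} (ha : ‖a‖ ≤ 1) (hb : ‖b‖ ≤ 1) :
    ‖1 - conj b * a‖ ≤ 2 := by
  have : ‖conj b * a‖ ≤ 1 := by
    rw [norm_mul, norm_conj]; exact mul_le_one₀ hb (norm_nonneg a) ha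
  calc ‖1 - conj b * a‖ ≤ ‖(1 : ℂ)‖ + ‖conj b * a‖ := norm_sub_le _ _
    _ ≤ 2 := by rw [norm_one]; linarith

noncomputable def pseudoHyperbolicDist (a b : ℂ) : ℝ := ‖a - b‖ / ‖1 - conj b * a‖

noncomputable def horocycleRatio (α z : ℂ) : ℝ := (1 - ‖z‖ ^ 2) / ‖1 - conj α * z‖ ^ 2

theorem pseudoHyperbolicDist_nonneg (a b : ℂ) : 0 ≤ pseudoHyperbolicDist a b :=
  div_nonneg (norm_nonneg _) (norm_nonneg _)

theorem one_sub_pseudoHyperbolicDist_sq {a b : ℂ} (ha : ‖a‖ < 1) (hb : ‖b‖ ≤ 1) :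
    1 - pseudoHyperbolicDist a b ^ 2 = (1 - ‖b‖ ^ 2) * horocycleRatio b a := by
  have hd := (norm_one_sub_conj_mul_pos ha hb).ne'
  rw [pseudoHyperbolicDist, horocycleRatio, div_pow, one_sub_div (pow_ne_zero 2 hd),
    norm_one_sub_conj_mul_sq_sub_norm_sub_sq, mul_comm (1 - ‖a‖ ^ 2), mul_div_assoc]

theorem pseudoHyperbolicDist_lt_one {a b : ℂ} (ha : ‖a‖ < 1) (hb : ‖b‖ < 1) :
    pseudoHyperbolicDist a b < 1 := by
  have hd := norm_one_sub_conj_mul_pos ha hb.le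
  have ha₂ : ‖a‖ ^ 2 < 1 := pow_lt_one₀ (norm_nonneg a) ha two_ne_zero
  have hb₂ : ‖b‖ ^ 2 < 1 := pow_lt_one₀ (norm_nonneg b) hb two_ne_zero
  have hpos : 0 < 1 - pseudoHyperbolicDist a b ^ 2 := by
    rw [one_sub_pseudoHyperbolicDist_sq ha hb.le, horocycleRatio]
    exact mul_pos (sub_pos.2 hb₂) (div_pos (sub_pos.2 ha₂) (by positivity))
  exact (sq_lt_one_iff₀ (pseudoHyperbolicDist_nonneg a b)).1 (sub_pos.1 hpos)

theorem dist_le_two_mul_pseudoHyperbolicDist {a b : ℂ} (ha : ‖a‖ < 1) (hb : ‖b‖ ≤ 1) :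
    dist a b ≤ 2 * pseudoHyperbolicDist a b := by
  have hd := norm_one_sub_conj_mul_pos ha hb
  rw [dist_eq_norm, pseudoHyperbolicDist, mul_div_assoc', le_div_iff₀ hd, mul_comm 2]
  exact mul_le_mul_of_nonneg_left (norm_one_sub_conj_mul_le_two ha.le hb) (norm_nonneg _)

noncomputable def mobiusInvolution (b w : ℂ) : ℂ := (b - w) / (1 - conj b * w)

theorem norm_mobiusInvolution (b w : ℂ) :
    ‖mobiusInvolution b w‖ = pseudoHyperbolicDist w b := by
  rw [mobiusInvolution, norm_div, norm_sub_rev, pseudoHyperbolicDist]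

theorem mobiusInvolution_mapsTo {b : ℂ} (hb : ‖b‖ < 1) :
    MapsTo (mobiusInvolution b) (ball 0 1) (ball 0 1) := fun w hw => by
  rw [mem_ball_zero_iff] at hw ⊢
  rw [norm_mobiusInvolution]
  exact pseudoHyperbolicDist_lt_one hw hb

theorem mobiusInvolution_mobiusInvolution {b w : ℂ} (hb : ‖b‖ < 1) (hw : ‖w‖ < 1) :
    mobiusInvolution b (mobiusInvolution b w) = w := by
  have h₁ := one_sub_conj_mul_ne_zero hw hb.le
  have h₂ := one_sub_conj_mul_ne_zero hb hb.le
  have hnum : b - (b - w) / (1 - conj b * w) = w * (1 - conj b * b) / (1 - conj b * w) := by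
    rw [eq_div_iff h₁, sub_mul, div_mul_cancel₀ _ h₁]
    ring
  have hden :
      1 - conj b * ((b - w) / (1 - conj b * w)) = (1 - conj b * b) / (1 - conj b * w) := by
    rw [eq_div_iff h₁, sub_mul, mul_assoc, div_mul_cancel₀ _ h₁]
    ring
  rw [mobiusInvolution, mobiusInvolution, hnum, hden, div_div_div_cancel_right₀ h₁,
    mul_div_cancel_right₀ _ h₂]

theorem differentiableOn_mobiusInvolution {b : ℂ} (hb : ‖b‖ < 1) :
    DifferentiableOn ℂ (mobiusInvolution b) (ball 0 1) :=
  ((differentiableOn_const b).sub differentiableOn_id).div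
    ((differentiableOn_const 1).sub ((differentiableOn_const _).mul differentiableOn_id))
    fun _ hw => one_sub_conj_mul_ne_zero (mem_ball_zero_iff.1 hw) hb.le

theorem pseudoHyperbolicDist_le_of_mapsTo_ball {g : ℂ → ℂ}
    (hg : DifferentiableOn ℂ g (ball 0 1)) (hgm : MapsTo g (ball 0 1) (ball 0 1)) {a b : ℂ}
    (ha : ‖a‖ < 1) (hb : ‖b‖ < 1) :
    pseudoHyperbolicDist (g a) (g b) ≤ pseudoHyperbolicDist a b := by
  have hgb : ‖g b‖ < 1 := mem_ball_zero_iff.1 (hgm (mem_ball_zero_iff.2 hb))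
  set h := mobiusInvolution (g b) ∘ g ∘ mobiusInvolution b
  have hd : DifferentiableOn ℂ h (ball 0 1) :=
    (differentiableOn_mobiusInvolution hgb).comp
      (hg.comp (differentiableOn_mobiusInvolution hb) (mobiusInvolution_mapsTo hb))
      (hgm.comp (mobiusInvolution_mapsTo hb))
  have hm : MapsTo h (ball 0 1) (ball 0 1) :=
    (mobiusInvolution_mapsTo hgb).comp (hgm.comp (mobiusInvolution_mapsTo hb))
  have h₀ : h 0 = 0 := by simp [h, mobiusInvolution]
  have := norm_le_norm_of_mapsTo_ball hd (hm.mono_right ball_subset_closedBall) h₀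
    (norm_mobiusInvolution b a ▸ pseudoHyperbolicDist_lt_one ha hb)
  simpa only [h, Function.comp_apply, mobiusInvolution_mobiusInvolution hb ha,
    norm_mobiusInvolution] using this

theorem horocycleRatio_le_of_isFixedPt {g : ℂ → ℂ} (hg : DifferentiableOn ℂ g (ball 0 1))
    (hgm : MapsTo g (ball 0 1) (ball 0 1)) {w z : ℂ} (hw : ‖w‖ < 1) (hwg : IsFixedPt g w)
    (hz : ‖z‖ < 1) :
    horocycleRatio w z ≤ horocycleRatio w (g z) := by
  have hgz : ‖g z‖ < 1 := mem_ball_zero_iff.1 (hgm (mem_ball_zero_iff.2 hz))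
  have hρ := pseudoHyperbolicDist_le_of_mapsTo_ball hg hgm hz hw
  rw [hwg.eq] at hρ
  have hρ_sq : 1 - pseudoHyperbolicDist z w ^ 2 ≤ 1 - pseudoHyperbolicDist (g z) w ^ 2 :=
    sub_le_sub_left (pow_le_pow_left₀ (pseudoHyperbolicDist_nonneg _ _) hρ 2) 1
  rw [one_sub_pseudoHyperbolicDist_sq hz hw.le, one_sub_pseudoHyperbolicDist_sq hgz hw.le] at hρ_sq
  exact le_of_mul_le_mul_left hρ_sq (sub_pos.2 (pow_lt_one₀ (norm_nonneg w) hw two_ne_zero))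

-- `t ↦ (1 - t) / (1 - r² t)` maps the closed unit disk onto the disk with diameter
-- `[0, 2 / (1 + r²)]`.
theorem one_add_sq_mul_norm_one_sub_le {r : ℝ} (hr₀ : 0 ≤ r) (hr₁ : r ≤ 1) {t : ℂ}
    (ht : ‖t‖ ≤ 1) :
    (1 + r ^ 2) * ‖1 - t‖ ≤ 2 * ‖1 - (r : ℂ) ^ 2 * t‖ := by
  have ht' : t.re * t.re + t.im * t.im ≤ 1 := by
    rw [← normSq_apply, ← Complex.sq_norm]; nlinarith [norm_nonneg t]
  have hre : -1 ≤ t.re := by nlinarith [sq_nonneg t.im]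
  have hr₂ : 0 ≤ 1 - r ^ 2 := sub_nonneg.2 (pow_le_one₀ hr₀ hr₁)
  -- the difference of the squares of the two sides is `(1 - r²)` times this bracket
  have hbracket : 0 ≤ (3 + r ^ 2) + 2 * t.re * (1 - r ^ 2)
      - (t.re * t.re + t.im * t.im) * (1 + 3 * r ^ 2) := by
    nlinarith [mul_nonneg hr₂ (neg_le_iff_add_nonneg.1 hre),
      mul_nonneg (sub_nonneg.2 ht') (by positivity : (0 : ℝ) ≤ 1 + 3 * r ^ 2)]
  have hsq : ((1 + r ^ 2) * ‖1 - t‖) ^ 2 ≤ (2 * ‖1 - (r : ℂ) ^ 2 * t‖) ^ 2 := by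
    simp only [mul_pow, Complex.sq_norm, normSq_apply, sub_re, sub_im, mul_re, mul_im, one_re,
      one_im, ← ofReal_pow, ofReal_re, ofReal_im]
    nlinarith [mul_nonneg hr₂ hbracket]
  exact (pow_le_pow_iff_left₀ (by positivity) (by positivity) two_ne_zero).1 hsq

theorem pseudoHyperbolicDist_real_mul_le {r : ℝ} (hr₀ : 0 ≤ r) (hr₁ : r ≤ 1) {u v : ℂ}
    (hu : ‖u‖ < 1) (hv : ‖v‖ < 1) :
    pseudoHyperbolicDist (r * u) (r * v) ≤ 2 * r / (1 + r ^ 2) * pseudoHyperbolicDist u v := by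
  have hrv : ‖(r : ℂ) * v‖ ≤ 1 := by
    rw [norm_mul, norm_real, Real.norm_of_nonneg hr₀]
    exact mul_le_one₀ hr₁ (norm_nonneg v) hv.le
  have hru : ‖(r : ℂ) * u‖ < 1 := by
    rw [norm_mul, norm_real, Real.norm_of_nonneg hr₀]
    exact mul_lt_one_of_nonneg_of_lt_one_right hr₁ (norm_nonneg u) hu
  have hd := norm_one_sub_conj_mul_pos hu hv.le
  have hd' := norm_one_sub_conj_mul_pos hru hrv
  have hconj : 1 - conj ((r : ℂ) * v) * (r * u) = 1 - (r : ℂ) ^ 2 * (conj v * u) := by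
    rw [map_mul, conj_ofReal]; ring
  have key := one_add_sq_mul_norm_one_sub_le hr₀ hr₁ (norm_conj_mul_lt_one hu hv.le).le
  rw [← hconj] at key
  rw [pseudoHyperbolicDist, pseudoHyperbolicDist, ← mul_sub, norm_mul, norm_real,
    Real.norm_of_nonneg hr₀, div_mul_div_comm, div_le_div_iff₀ hd' (mul_pos (by positivity) hd)]
  calc r * ‖u - v‖ * ((1 + r ^ 2) * ‖1 - conj v * u‖)
      ≤ r * ‖u - v‖ * (2 * ‖1 - conj ((r : ℂ) * v) * (r * u)‖) := by gcongr
    _ = 2 * r * ‖u - v‖ * ‖1 - conj ((r : ℂ) * v) * (r * u)‖ := by ring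

theorem pseudoHyperbolicDist_le_mul_of_mapsTo_ball {g : ℂ → ℂ}
    (hg : DifferentiableOn ℂ g (ball 0 1)) {r : ℝ} (hr : r ≤ 1)
    (hgr : MapsTo g (ball 0 1) (ball 0 r)) {a b : ℂ} (ha : ‖a‖ < 1) (hb : ‖b‖ < 1) :
    pseudoHyperbolicDist (g a) (g b) ≤ 2 * r / (1 + r ^ 2) * pseudoHyperbolicDist a b := by
  have hr₀ : 0 < r := pos_of_mem_ball (hgr (mem_ball_self one_pos))
  set h : ℂ → ℂ := fun z => (r : ℂ)⁻¹ * g z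
  have hgh : ∀ z, g z = r * h z := fun z => by
    simp only [h, ← mul_assoc, mul_inv_cancel₀ (ofReal_ne_zero.2 hr₀.ne'), one_mul]
  have hhm : MapsTo h (ball 0 1) (ball 0 1) := fun z hz => by
    have := mem_ball_zero_iff.1 (hgr hz)
    rw [mem_ball_zero_iff, norm_mul, norm_inv, norm_real, Real.norm_of_nonneg hr₀.le]
    exact (inv_mul_lt_one₀ hr₀).2 this
  have hhd : DifferentiableOn ℂ h (ball 0 1) := hg.const_mul _
  have hha : ‖h a‖ < 1 := mem_ball_zero_iff.1 (hhm (mem_ball_zero_iff.2 ha))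
  have hhb : ‖h b‖ < 1 := mem_ball_zero_iff.1 (hhm (mem_ball_zero_iff.2 hb))
  rw [hgh, hgh]
  exact (pseudoHyperbolicDist_real_mul_le hr₀.le hr hha hhb).trans
    (mul_le_mul_of_nonneg_left (pseudoHyperbolicDist_le_of_mapsTo_ball hhd hhm ha hb)
      (by positivity))

theorem pseudoHyperbolicDist_iterate_succ_le {g : ℂ → ℂ} {c : ℝ} (hc : 0 ≤ c)
    (hgm : MapsTo g (ball 0 1) (ball 0 1))
    (hg : ∀ a ∈ ball (0 : ℂ) 1, ∀ b ∈ ball (0 : ℂ) 1,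
      pseudoHyperbolicDist (g a) (g b) ≤ c * pseudoHyperbolicDist a b)
    {z : ℂ} (hz : z ∈ ball (0 : ℂ) 1) (n : ℕ) :
    pseudoHyperbolicDist (g^[n + 1] z) (g^[n] z) ≤ c ^ n * pseudoHyperbolicDist (g z) z := by
  induction n with
  | zero => simp
  | succ n ih =>
    calc pseudoHyperbolicDist (g^[n + 1 + 1] z) (g^[n + 1] z)
        = pseudoHyperbolicDist (g (g^[n + 1] z)) (g (g^[n] z)) := by
          simp only [iterate_succ_apply']
      _ ≤ c * pseudoHyperbolicDist (g^[n + 1] z) (g^[n] z) :=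
          hg _ (hgm.iterate _ hz) _ (hgm.iterate _ hz)
      _ ≤ c ^ (n + 1) * pseudoHyperbolicDist (g z) z := by
          rw [pow_succ', mul_assoc]; exact mul_le_mul_of_nonneg_left ih hc

theorem exists_isFixedPt_of_mapsTo_ball {g : ℂ → ℂ} (hg : DifferentiableOn ℂ g (ball 0 1))
    {r : ℝ} (hr : r < 1) (hgr : MapsTo g (ball 0 1) (ball 0 r)) :
    ∃ w ∈ ball (0 : ℂ) 1, IsFixedPt g w := by
  have hr₀ : 0 < r := pos_of_mem_ball (hgr (mem_ball_self one_pos))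
  set c := 2 * r / (1 + r ^ 2)
  have hc₀ : 0 ≤ c := by positivity
  have hc₁ : c < 1 := by
    rw [div_lt_one (by positivity)]; nlinarith [sq_pos_of_pos (sub_pos.2 hr)]
  have hgm : MapsTo g (ball 0 1) (ball 0 1) := hgr.mono_right (ball_subset_ball hr.le)
  have h₀ : (0 : ℂ) ∈ ball (0 : ℂ) 1 := mem_ball_self one_pos
  have hdist : ∀ n, dist (g^[n] 0) (g^[n + 1] 0) ≤ 2 * pseudoHyperbolicDist (g 0) 0 * c ^ n := by
    intro n
    have hstep := pseudoHyperbolicDist_iterate_succ_le hc₀ hgm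
      (fun a ha b hb => pseudoHyperbolicDist_le_mul_of_mapsTo_ball hg hr.le hgr
        (mem_ball_zero_iff.1 ha) (mem_ball_zero_iff.1 hb)) h₀ n
    rw [dist_comm]
    calc dist (g^[n + 1] 0) (g^[n] 0)
        ≤ 2 * pseudoHyperbolicDist (g^[n + 1] 0) (g^[n] 0) :=
          dist_le_two_mul_pseudoHyperbolicDist (mem_ball_zero_iff.1 (hgm.iterate _ h₀))
            (mem_ball_zero_iff.1 (hgm.iterate _ h₀)).le
      _ ≤ 2 * pseudoHyperbolicDist (g 0) 0 * c ^ n := by linarith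
  obtain ⟨w, hw⟩ := cauchySeq_tendsto_of_complete (cauchySeq_of_le_geometric c _ hc₁ hdist)
  have hw_mem : w ∈ closedBall (0 : ℂ) r := by
    refine isClosed_closedBall.mem_of_tendsto hw (Eventually.of_forall fun n => ?_)
    cases n with
    | zero => simpa using hr₀.le
    | succ n =>
      rw [iterate_succ_apply']
      exact ball_subset_closedBall (hgr (hgm.iterate n h₀))
  have hw_ball : w ∈ ball (0 : ℂ) 1 := closedBall_subset_ball hr hw_mem
  exact ⟨w, hw_ball,
    isFixedPt_of_tendsto_iterate hw (hg.continuousOn.continuousAt (isOpen_ball.mem_nhds hw_ball))⟩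

theorem continuousAt_horocycleRatio {α z : ℂ} (h : 1 - conj α * z ≠ 0) :
    ContinuousAt (fun p : ℂ × ℂ => horocycleRatio p.1 p.2) (α, z) := by
  unfold horocycleRatio
  exact ContinuousAt.div (by fun_prop) (by fun_prop) (pow_ne_zero 2 (norm_ne_zero_iff.2 h))

theorem horocycleRatio_le_of_tendsto_isFixedPt {g : ℕ → ℂ → ℂ}
    (hg : ∀ n, DifferentiableOn ℂ (g n) (ball 0 1)) (hgm : ∀ n, MapsTo (g n) (ball 0 1) (ball 0 1))
    {w : ℕ → ℂ} (hw : ∀ n, ‖w n‖ < 1) (hwg : ∀ n, IsFixedPt (g n) (w n)) {α : ℂ} (hα : ‖α‖ ≤ 1)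
    (hwα : Tendsto w atTop (𝓝 α)) {z y : ℂ} (hz : ‖z‖ < 1) (hy : ‖y‖ < 1)
    (hgz : Tendsto (fun n => g n z) atTop (𝓝 y)) :
    horocycleRatio α z ≤ horocycleRatio α y :=
  le_of_tendsto_of_tendsto'
    ((continuousAt_horocycleRatio (one_sub_conj_mul_ne_zero hz hα)).tendsto.comp
      (hwα.prodMk_nhds tendsto_const_nhds))
    ((continuousAt_horocycleRatio (one_sub_conj_mul_ne_zero hy hα)).tendsto.comp
      (hwα.prodMk_nhds hgz))
    fun n => horocycleRatio_le_of_isFixedPt (hg n) (hgm n) (hw n) (hwg n) hz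

theorem mapsTo_real_mul_ball {f : ℂ → ℂ} (hf : MapsTo f (ball 0 1) (ball 0 1)) {r : ℝ}
    (hr : 0 < r) : MapsTo (fun z => r * f z) (ball 0 1) (ball 0 r) := fun z hz => by
  rw [mem_ball_zero_iff, norm_mul, norm_real, Real.norm_of_nonneg hr.le]
  exact mul_lt_of_lt_one_right hr (mem_ball_zero_iff.1 (hf hz))

/-- Denjoy–Wolff: a fixed-point-free holomorphic self-map of the unit disk contracts
every horocycle at some boundary point `α`. -/
theorem denjoy_wolff
    (f : ℂ → ℂ) (hf : DifferentiableOn ℂ f (ball (0 : ℂ) 1))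
    (hmap : ∀ z ∈ ball (0 : ℂ) 1, ‖f z‖ < 1)
    (hnofix : ∀ z ∈ ball (0 : ℂ) 1, f z ≠ z) :
    ∃ α : ℂ, ‖α‖ = 1 ∧
      (∀ z ∈ ball (0 : ℂ) 1, ∀ w ∈ ball (0 : ℂ) 1,
        (1 - ‖w‖ ^ 2) / ‖1 - (starRingEnd ℂ) α * w‖ ^ 2 ≥
            (1 - ‖z‖ ^ 2) / ‖1 - (starRingEnd ℂ) α * z‖ ^ 2 →
          (1 - ‖f w‖ ^ 2) / ‖1 - (starRingEnd ℂ) α * f w‖ ^ 2 ≥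
            (1 - ‖z‖ ^ 2) / ‖1 - (starRingEnd ℂ) α * z‖ ^ 2) ∧
      (∀ z ∈ ball (0 : ℂ) 1,
        (1 - ‖f z‖ ^ 2) / ‖1 - (starRingEnd ℂ) α * f z‖ ^ 2 ≥
          (1 - ‖z‖ ^ 2) / ‖1 - (starRingEnd ℂ) α * z‖ ^ 2) := by
  have hfm : MapsTo f (ball 0 1) (ball 0 1) := fun z hz => mem_ball_zero_iff.2 (hmap z hz)
  obtain ⟨r, -, hr, hr_lim⟩ := exists_seq_strictMono_tendsto' (zero_lt_one' ℝ)
  set g : ℕ → ℂ → ℂ := fun n z => r n * f z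
  have hgm : ∀ n, MapsTo (g n) (ball 0 1) (ball 0 1) := fun n =>
    (mapsTo_real_mul_ball hfm (hr n).1).mono_right (ball_subset_ball (hr n).2.le)
  choose w hw hwg using fun n =>
    exists_isFixedPt_of_mapsTo_ball (hf.const_mul _) (hr n).2 (mapsTo_real_mul_ball hfm (hr n).1)
  obtain ⟨α, hα, φ, hφ, hwα⟩ :=
    (isCompact_closedBall (0 : ℂ) 1).tendsto_subseq fun n => ball_subset_closedBall (hw n)
  have hrφ : Tendsto (fun n => (r (φ n) : ℂ)) atTop (𝓝 1) := by
    simpa [comp_def] using (continuous_ofReal.tendsto 1).comp (hr_lim.comp hφ.tendsto_atTop)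
  have hg_lim : ∀ y, Tendsto (fun n => g (φ n) y) atTop (𝓝 (f y)) := fun y => by
    simpa using hrφ.mul_const (f y)
  have hα_norm : ‖α‖ = 1 := by
    refine (mem_closedBall_zero_iff.1 hα).antisymm (not_lt.1 fun hα_lt => ?_)
    have hα_ball := mem_ball_zero_iff.2 hα_lt
    have hf_cont : ContinuousAt f α := hf.continuousOn.continuousAt (isOpen_ball.mem_nhds hα_ball)
    have hlim := (hrφ.mul (hf_cont.tendsto.comp hwα)).congr fun n => hwg (φ n)
    exact hnofix α hα_ball (tendsto_nhds_unique (one_mul (f α) ▸ hlim) hwα)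
  have key : ∀ z ∈ ball (0 : ℂ) 1, horocycleRatio α z ≤ horocycleRatio α (f z) := fun z hz =>
    horocycleRatio_le_of_tendsto_isFixedPt (fun n => hf.const_mul _) (fun n => hgm (φ n))
      (fun n => mem_ball_zero_iff.1 (hw (φ n))) (fun n => hwg (φ n))
      (mem_closedBall_zero_iff.1 hα) hwα (mem_ball_zero_iff.1 hz) (hmap z hz) (hg_lim z)
  exact ⟨α, hα_norm, fun z _ w hw hzw => (key w hw).trans' hzw, key⟩
end

section
/- (Burns–Krantz) Let φ be holomorphic on the open unit disk 𝔻 with |φ(z)| < 1 for all z ∈ 𝔻, and suppose there exists a constant C > 0 such that |φ(z) − z| ≤ C·|z − 1|⁴ for all z ∈ 𝔻. Then φ(z) = z for every z ∈ 𝔻. -/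
/-!
Transport `φ` to the right half-plane `H = {w | 0 < re w}` by the Cayley map
`w ↦ (w - 1) / (w + 1)`: the conjugate `P` of `φ` is a holomorphic self-map of `H`, and the
fourth-order contact of `φ` with the identity at `1` becomes `P t = t + O(t⁻²)` as `t → +∞`.
The Schwarz–Pick lemma in `H`, with one point running to `∞` along the real axis, gives Julia's
inequality `re w ≤ re (P w)`, so `R = P - id` has nonnegative real part. If `re R` vanishes
somewhere, `R` is constant by the maximum principle and the constant is `lim R t = 0`; otherwise
`R` is itself a self-map of `H`, and Schwarz–Pick again is incompatible with `t * R t → 0`.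
Hence `P = id`, that is `φ = id`.
-/

open Complex ComplexConjugate Filter Metric Set Topology

def rightHalfPlane : Set ℂ := {w | 0 < w.re}

@[simp]
lemma mem_rightHalfPlane {w : ℂ} : w ∈ rightHalfPlane ↔ 0 < w.re := Iff.rfl

lemma one_mem_rightHalfPlane : (1 : ℂ) ∈ rightHalfPlane := by simp

lemma rightHalfPlane_subset_re_nonneg : rightHalfPlane ⊆ {w | 0 ≤ w.re} := fun _ hw =>
  (mem_rightHalfPlane.1 hw).le

lemma isOpen_rightHalfPlane : IsOpen rightHalfPlane :=
  isOpen_lt continuous_const continuous_re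

lemma isPreconnected_rightHalfPlane : IsPreconnected rightHalfPlane :=
  (convex_halfSpace_re_gt 0).isPreconnected

noncomputable def halfPlaneToDisk (b w : ℂ) : ℂ := (w - b) / (w + conj b)

noncomputable def diskToHalfPlane (b ζ : ℂ) : ℂ := (b + conj b * ζ) / (1 - ζ)

lemma sq_norm_add_conj (a b : ℂ) : ‖a + conj b‖ ^ 2 = ‖a - b‖ ^ 2 + 4 * a.re * b.re := by
  simp only [Complex.sq_norm, normSq_apply, add_re, add_im, sub_re, sub_im, conj_re, conj_im]
  ring

lemma add_conj_ne_zero {a b : ℂ} (ha : 0 ≤ a.re) (hb : 0 < b.re) : a + conj b ≠ 0 := by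
  intro h
  have := congrArg re h
  simp only [add_re, conj_re, zero_re] at this
  linarith

lemma sq_norm_halfPlaneToDisk (b w : ℂ) :
    ‖halfPlaneToDisk b w‖ ^ 2 = ‖w - b‖ ^ 2 / (‖w - b‖ ^ 2 + 4 * w.re * b.re) := by
  rw [halfPlaneToDisk, norm_div, div_pow, sq_norm_add_conj]

lemma norm_halfPlaneToDisk_le_one {b w : ℂ} (hb : 0 < b.re) (hw : 0 ≤ w.re) :
    ‖halfPlaneToDisk b w‖ ≤ 1 := by
  rw [← sq_le_one_iff₀ (norm_nonneg _), sq_norm_halfPlaneToDisk]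
  exact div_le_one_of_le₀ (by nlinarith) (by positivity)

lemma norm_halfPlaneToDisk_lt_one {b w : ℂ} (hb : 0 < b.re) (hw : 0 < w.re) :
    ‖halfPlaneToDisk b w‖ < 1 := by
  rw [← sq_lt_one_iff₀ (norm_nonneg _), sq_norm_halfPlaneToDisk]
  exact (div_lt_one (by positivity)).2 (by nlinarith)

lemma norm_halfPlaneToDisk_eq_one_of_re_eq_zero {b w : ℂ} (hb : 0 < b.re) (hw : w.re = 0) :
    ‖halfPlaneToDisk b w‖ = 1 := by
  have hwb : w - b ≠ 0 := fun h => by simpa [hw, hb.ne'] using congrArg re h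
  rw [← pow_eq_one_iff_of_nonneg (norm_nonneg _) two_ne_zero, sq_norm_halfPlaneToDisk, hw]
  simp [hwb]

lemma halfPlaneToDisk_self (b : ℂ) : halfPlaneToDisk b b = 0 := by
  simp [halfPlaneToDisk]

lemma diskToHalfPlane_zero (b : ℂ) : diskToHalfPlane b 0 = b := by
  simp [diskToHalfPlane]

lemma re_diskToHalfPlane (b ζ : ℂ) :
    (diskToHalfPlane b ζ).re = b.re * (1 - normSq ζ) / normSq (1 - ζ) := by
  simp only [diskToHalfPlane, div_re, normSq_apply, add_re, add_im, mul_re, mul_im, conj_re,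
    conj_im, sub_re, sub_im, one_re, one_im]
  ring

lemma ne_one_of_norm_lt_one {ζ : ℂ} (hζ : ‖ζ‖ < 1) : ζ ≠ 1 := by
  rintro rfl
  simp at hζ

lemma re_diskToHalfPlane_pos {b ζ : ℂ} (hb : 0 < b.re) (hζ : ‖ζ‖ < 1) :
    0 < (diskToHalfPlane b ζ).re := by
  have hζ1 : 1 - ζ ≠ 0 := sub_ne_zero.2 (ne_one_of_norm_lt_one hζ).symm
  rw [re_diskToHalfPlane, ← Complex.sq_norm, ← Complex.sq_norm]
  have : ‖ζ‖ ^ 2 < 1 := by nlinarith [norm_nonneg ζ]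
  exact div_pos (mul_pos hb (by linarith)) (by positivity)

lemma diskToHalfPlane_halfPlaneToDisk {b w : ℂ} (hb : 0 < b.re) (hw : 0 ≤ w.re) :
    diskToHalfPlane b (halfPlaneToDisk b w) = w := by
  have hwb := add_conj_ne_zero hw hb
  have hbb := add_conj_ne_zero hb.le hb
  have hden : 1 - (w - b) / (w + conj b) = (b + conj b) / (w + conj b) := by
    field_simp; ring
  have hnum : b + conj b * ((w - b) / (w + conj b)) = w * ((b + conj b) / (w + conj b)) := by
    field_simp; ring
  rw [diskToHalfPlane, halfPlaneToDisk, hden, hnum, mul_div_cancel_right₀ _ (div_ne_zero hbb hwb)]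

lemma halfPlaneToDisk_diskToHalfPlane {b ζ : ℂ} (hb : 0 < b.re) (hζ : ζ ≠ 1) :
    halfPlaneToDisk b (diskToHalfPlane b ζ) = ζ := by
  have hbb := add_conj_ne_zero hb.le hb
  have h1 : 1 - ζ ≠ 0 := sub_ne_zero.2 hζ.symm
  have hnum : (b + conj b * ζ) / (1 - ζ) - b = ζ * ((b + conj b) / (1 - ζ)) := by
    field_simp; ring
  have hden : (b + conj b * ζ) / (1 - ζ) + conj b = (b + conj b) / (1 - ζ) := by
    field_simp; ring
  rw [diskToHalfPlane, halfPlaneToDisk, hnum, hden, mul_div_cancel_right₀ _ (div_ne_zero hbb h1)]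

lemma mapsTo_halfPlaneToDisk {b : ℂ} (hb : 0 < b.re) :
    MapsTo (halfPlaneToDisk b) rightHalfPlane (ball 0 1) := fun _ hw =>
  mem_ball_zero_iff.2 (norm_halfPlaneToDisk_lt_one hb hw)

lemma mapsTo_diskToHalfPlane {b : ℂ} (hb : 0 < b.re) :
    MapsTo (diskToHalfPlane b) (ball 0 1) rightHalfPlane := fun _ hζ =>
  re_diskToHalfPlane_pos hb (mem_ball_zero_iff.1 hζ)

lemma differentiableOn_halfPlaneToDisk {b : ℂ} (hb : 0 < b.re) :
    DifferentiableOn ℂ (halfPlaneToDisk b) {w | 0 ≤ w.re} :=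
  (differentiableOn_id.sub_const b).div (differentiableOn_id.add_const _)
    fun _ hw => add_conj_ne_zero hw hb

lemma differentiableOn_diskToHalfPlane (b : ℂ) :
    DifferentiableOn ℂ (diskToHalfPlane b) (ball 0 1) :=
  ((differentiableOn_id.const_mul _).const_add b).div (differentiableOn_id.const_sub 1)
    fun _ hζ => sub_ne_zero.2 (ne_one_of_norm_lt_one (mem_ball_zero_iff.1 hζ)).symm

lemma tendsto_ofReal_inv_atTop_zero : Tendsto (fun t : ℝ => (t : ℂ)⁻¹) atTop (𝓝 0) := by
  simpa [Function.comp_def] using (continuous_ofReal.tendsto 0).comp tendsto_inv_atTop_zero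

section SelfMap

variable {Q : ℂ → ℂ} (hQ : DifferentiableOn ℂ Q rightHalfPlane)
  (hmaps : MapsTo Q rightHalfPlane rightHalfPlane)
include hQ hmaps

/-- Schwarz–Pick lemma for the right half-plane. -/
theorem norm_halfPlaneToDisk_map_le {v w : ℂ} (hv : v ∈ rightHalfPlane)
    (hw : w ∈ rightHalfPlane) : ‖halfPlaneToDisk (Q v) (Q w)‖ ≤ ‖halfPlaneToDisk v w‖ := by
  have hQv : 0 < (Q v).re := hmaps hv
  set g := halfPlaneToDisk (Q v) ∘ Q ∘ diskToHalfPlane v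
  have hg : DifferentiableOn ℂ g (ball 0 1) :=
    ((differentiableOn_halfPlaneToDisk hQv).mono rightHalfPlane_subset_re_nonneg).comp
      (hQ.comp (differentiableOn_diskToHalfPlane v) (mapsTo_diskToHalfPlane hv))
      (hmaps.comp (mapsTo_diskToHalfPlane hv))
  have hg_maps : MapsTo g (ball 0 1) (closedBall 0 1) :=
    (((mapsTo_halfPlaneToDisk hQv).comp hmaps).comp (mapsTo_diskToHalfPlane hv)).mono_right
      ball_subset_closedBall
  have hg0 : g 0 = 0 := by simp [g, diskToHalfPlane_zero, halfPlaneToDisk_self]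
  have hgw : g (halfPlaneToDisk v w) = halfPlaneToDisk (Q v) (Q w) := by
    simp [g, diskToHalfPlane_halfPlaneToDisk hv (le_of_lt hw)]
  rw [← hgw]
  exact Complex.norm_le_norm_of_mapsTo_ball hg hg_maps hg0 (norm_halfPlaneToDisk_lt_one hv hw)

theorem sq_norm_map_sub_mul_re_le {v w : ℂ} (hv : v ∈ rightHalfPlane)
    (hw : w ∈ rightHalfPlane) :
    ‖Q w - Q v‖ ^ 2 * (w.re * v.re) ≤ ‖w - v‖ ^ 2 * ((Q w).re * (Q v).re) := by
  have hv' : 0 < v.re := hv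
  have hw' : 0 < w.re := hw
  have hQv : 0 < (Q v).re := hmaps hv
  have hQw : 0 < (Q w).re := hmaps hw
  have h := pow_le_pow_left₀ (norm_nonneg _) (norm_halfPlaneToDisk_map_le hQ hmaps hv hw) 2
  rw [sq_norm_halfPlaneToDisk, sq_norm_halfPlaneToDisk, div_le_div_iff₀ (by positivity)
    (by positivity)] at h
  nlinarith

/-- Julia's lemma at the boundary point `∞`: let `v = t → ∞` in Schwarz–Pick. -/
theorem re_le_re_map_of_tendsto_div (hlim : Tendsto (fun t : ℝ => Q t / t) atTop (𝓝 1))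
    {w : ℂ} (hw : w ∈ rightHalfPlane) : w.re ≤ (Q w).re := by
  have hL : Tendsto (fun t : ℝ => ‖Q w * (t : ℂ)⁻¹ - Q t / t‖ ^ 2 * w.re) atTop (𝓝 w.re) := by
    simpa using
      (((tendsto_ofReal_inv_atTop_zero.const_mul (Q w)).sub hlim).norm.pow 2).mul_const w.re
  have hR : Tendsto (fun t : ℝ => ‖w * (t : ℂ)⁻¹ - 1‖ ^ 2 * ((Q w).re * (Q t / t).re)) atTop
      (𝓝 (Q w).re) := by
    simpa using (((tendsto_ofReal_inv_atTop_zero.const_mul w).sub_const 1).norm.pow 2).mul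
      (((continuous_re.tendsto _).comp hlim).const_mul (Q w).re)
  refine le_of_tendsto_of_tendsto hL hR ?_
  filter_upwards [eventually_gt_atTop 0] with t ht
  have h := sq_norm_map_sub_mul_re_le hQ hmaps (v := t) (by simpa using ht) hw
  have ht0 : (t : ℂ) ≠ 0 := ofReal_ne_zero.2 ht.ne'
  have hnorm : ‖(t : ℂ)‖ = t := by simp [ht.le]
  have hQ_div : Q w * (t : ℂ)⁻¹ - Q t / t = (Q w - Q t) / t := by field_simp
  have hw_div : w * (t : ℂ)⁻¹ - 1 = (w - t) / t := by field_simp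
  rw [hQ_div, hw_div, div_ofReal_re, norm_div, norm_div, hnorm]
  simp only [ofReal_re] at h
  calc (‖Q w - Q t‖ / t) ^ 2 * w.re
      = ‖Q w - Q t‖ ^ 2 * (w.re * t) / t ^ 3 := by field_simp
    _ ≤ ‖w - t‖ ^ 2 * ((Q w).re * (Q t).re) / t ^ 3 := by gcongr
    _ = (‖w - t‖ / t) ^ 2 * ((Q w).re * ((Q t).re / t)) := by field_simp

theorem not_tendsto_mul_map_nhds_zero : ¬ Tendsto (fun t : ℝ => (t : ℂ) * Q t) atTop (𝓝 0) := by
  intro hlim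
  have hQt : Tendsto (fun t : ℝ => Q t) atTop (𝓝 0) := by
    refine (zero_mul (0 : ℂ) ▸ hlim.mul tendsto_ofReal_inv_atTop_zero).congr' ?_
    filter_upwards [eventually_ne_atTop 0] with t ht
    exact mul_div_cancel_left₀ (Q t) (ofReal_ne_zero.2 ht)
  have hL : Tendsto (fun t : ℝ => ‖Q 1 - Q t‖ ^ 2) atTop (𝓝 (‖Q 1‖ ^ 2)) := by
    simpa using ((tendsto_const_nhds (x := Q 1)).sub hQt).norm.pow 2
  have hR : Tendsto (fun t : ℝ => ‖(t : ℂ)⁻¹ - 1‖ ^ 2 * ((Q 1).re * ((t : ℂ) * Q t).re)) atTop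
      (𝓝 0) := by
    simpa using ((tendsto_ofReal_inv_atTop_zero.sub_const 1).norm.pow 2).mul
      (((continuous_re.tendsto _).comp hlim).const_mul (Q 1).re)
  have hQ1 : ‖Q 1‖ ^ 2 ≤ 0 := by
    refine le_of_tendsto_of_tendsto hL hR ?_
    filter_upwards [eventually_gt_atTop 0] with t ht
    have h := sq_norm_map_sub_mul_re_le hQ hmaps (v := t) (by simpa using ht) one_mem_rightHalfPlane
    have ht0 : (t : ℂ) ≠ 0 := ofReal_ne_zero.2 ht.ne'
    have hnorm : ‖(t : ℂ)‖ = t := by simp [ht.le]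
    have h_div : (t : ℂ)⁻¹ - 1 = (1 - t) / t := by field_simp
    rw [h_div, norm_div, hnorm, re_ofReal_mul]
    simp only [ofReal_re, one_re, one_mul] at h
    calc ‖Q 1 - Q t‖ ^ 2 = ‖Q 1 - Q t‖ ^ 2 * t / t := by field_simp
      _ ≤ ‖1 - (t : ℂ)‖ ^ 2 * ((Q 1).re * (Q t).re) / t := by gcongr
      _ = (‖1 - (t : ℂ)‖ / t) ^ 2 * ((Q 1).re * (t * (Q t).re)) := by field_simp
  have : Q 1 = 0 := by simpa using hQ1.antisymm (sq_nonneg _)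
  simpa [this] using hmaps one_mem_rightHalfPlane

end SelfMap

/-- The Cayley transform of `R` attains its maximal modulus `1` at `w₀`. -/
theorem eqOn_const_of_re_nonneg_of_re_eq_zero {U : Set ℂ} (hUc : IsPreconnected U)
    (hUo : IsOpen U) {R : ℂ → ℂ} (hR : DifferentiableOn ℂ R U) (hre : ∀ w ∈ U, 0 ≤ (R w).re)
    {w₀ : ℂ} (hw₀ : w₀ ∈ U) (h0 : (R w₀).re = 0) : EqOn R (Function.const ℂ (R w₀)) U := by
  have h1 := one_mem_rightHalfPlane
  have hg : DifferentiableOn ℂ (halfPlaneToDisk 1 ∘ R) U :=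
    (differentiableOn_halfPlaneToDisk h1).comp hR hre
  have hmax : IsMaxOn (norm ∘ halfPlaneToDisk 1 ∘ R) U w₀ := fun w hw => by
    simpa [norm_halfPlaneToDisk_eq_one_of_re_eq_zero h1 h0] using
      norm_halfPlaneToDisk_le_one h1 (hre w hw)
  intro w hw
  have h := Complex.eqOn_of_isPreconnected_of_isMaxOn_norm hUc hUo hg hw₀ hmax hw
  simp only [Function.comp_apply, Function.const_apply] at h ⊢
  rw [← diskToHalfPlane_halfPlaneToDisk h1 (hre w hw),
    ← diskToHalfPlane_halfPlaneToDisk h1 (hre w₀ hw₀), h]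

theorem eqOn_zero_of_re_nonneg_of_tendsto_mul {R : ℂ → ℂ}
    (hR : DifferentiableOn ℂ R rightHalfPlane) (hre : ∀ w ∈ rightHalfPlane, 0 ≤ (R w).re)
    (hlim : Tendsto (fun t : ℝ => (t : ℂ) * R t) atTop (𝓝 0)) : EqOn R 0 rightHalfPlane := by
  by_cases h : ∃ w₀ ∈ rightHalfPlane, (R w₀).re = 0
  · obtain ⟨w₀, hw₀, h0⟩ := h
    have hconst := eqOn_const_of_re_nonneg_of_re_eq_zero isPreconnected_rightHalfPlane
      isOpen_rightHalfPlane hR hre hw₀ h0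
    have hval : Tendsto (fun t : ℝ => (t : ℂ) * R t * (t : ℂ)⁻¹) atTop (𝓝 (R w₀)) := by
      refine tendsto_const_nhds.congr' ?_
      filter_upwards [eventually_gt_atTop 0] with t ht
      have ht0 : (t : ℂ) ≠ 0 := ofReal_ne_zero.2 ht.ne'
      rw [hconst (show (t : ℂ) ∈ rightHalfPlane by simpa using ht), Function.const_apply]
      field_simp
    have h0 : R w₀ = 0 :=
      tendsto_nhds_unique hval (by simpa using hlim.mul tendsto_ofReal_inv_atTop_zero)
    intro w hw
    rw [hconst hw, Function.const_apply, h0, Pi.zero_apply]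
  · push Not at h
    exact absurd hlim (not_tendsto_mul_map_nhds_zero hR
      fun w hw => lt_of_le_of_ne (hre w hw) (h w hw).symm)

lemma diskToHalfPlane_one_sub_diskToHalfPlane_one {u z : ℂ} (hu : u ≠ 1) (hz : z ≠ 1) :
    diskToHalfPlane 1 u - diskToHalfPlane 1 z = 2 * (u - z) / ((1 - u) * (1 - z)) := by
  have hu' : 1 - u ≠ 0 := sub_ne_zero.2 hu.symm
  have hz' : 1 - z ≠ 0 := sub_ne_zero.2 hz.symm
  simp only [diskToHalfPlane, map_one, one_mul]
  field_simp
  ring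

lemma norm_diskToHalfPlane_one_sub_le {u z : ℂ} {C : ℝ} (hz : z ≠ 1)
    (huz : ‖u - z‖ ≤ C * ‖z - 1‖ ^ 4) (hsmall : 2 * C * ‖z - 1‖ ^ 3 ≤ 1) :
    ‖diskToHalfPlane 1 u - diskToHalfPlane 1 z‖ ≤ 4 * C * ‖z - 1‖ ^ 2 := by
  set d := ‖z - 1‖
  have hd : 0 < d := norm_pos_iff.2 (sub_ne_zero.2 hz)
  have h1u : d / 2 ≤ ‖1 - u‖ := by
    have : d ≤ ‖1 - u‖ + ‖u - z‖ := by
      simpa only [d, norm_sub_rev z 1] using norm_sub_le_norm_sub_add_norm_sub 1 u z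
    nlinarith
  have hu : u ≠ 1 := by
    rintro rfl
    simp only [sub_self, norm_zero] at h1u
    linarith
  rw [diskToHalfPlane_one_sub_diskToHalfPlane_one hu hz, norm_div, norm_mul, norm_mul,
    Complex.norm_two, norm_sub_rev 1 z]
  calc 2 * ‖u - z‖ / (‖1 - u‖ * d) ≤ 2 * (C * d ^ 4) / (d / 2 * d) := by
        gcongr
        exact mul_nonneg zero_le_two ((norm_nonneg _).trans huz)
    _ = 4 * C * d ^ 2 := by field_simp; ring

lemma norm_halfPlaneToDisk_one_ofReal_sub_one {t : ℝ} (ht : 0 ≤ t) :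
    ‖halfPlaneToDisk 1 t - 1‖ = 2 / (t + 1) := by
  have ht1 : (t : ℂ) + 1 ≠ 0 := by exact_mod_cast (by linarith : t + 1 ≠ 0)
  have h : halfPlaneToDisk 1 t - 1 = -2 / ((t + 1 : ℝ) : ℂ) := by
    simp only [halfPlaneToDisk, map_one, ofReal_add, ofReal_one]
    field_simp
    ring
  rw [h, norm_div, norm_neg, norm_real, Real.norm_of_nonneg (by linarith), Complex.norm_two]

theorem tendsto_mul_diskToHalfPlane_sub {φ : ℂ → ℂ} {C : ℝ}
    (hbound : ∀ z ∈ ball (0 : ℂ) 1, ‖φ z - z‖ ≤ C * ‖z - 1‖ ^ 4) :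
    Tendsto (fun t : ℝ => (t : ℂ) * (diskToHalfPlane 1 (φ (halfPlaneToDisk 1 t)) - t)) atTop
      (𝓝 0) := by
  have h1 := one_mem_rightHalfPlane
  have hC : 0 ≤ C := (norm_nonneg _).trans (by simpa using hbound 0 (mem_ball_self one_pos))
  have hd : Tendsto (fun t : ℝ => 2 / (t + 1)) atTop (𝓝 0) :=
    tendsto_const_nhds.div_atTop (tendsto_atTop_add_const_right _ 1 tendsto_id)
  have hsmall : ∀ᶠ t : ℝ in atTop, 2 * C * (2 / (t + 1)) ^ 3 < 1 :=
    ((hd.pow 3).const_mul (2 * C)).eventually_lt_const (by simp)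
  refine squeeze_zero_norm' ?_ (tendsto_const_nhds (x := 16 * C).div_atTop tendsto_id)
  filter_upwards [hsmall, eventually_gt_atTop 0] with t ht_small ht
  have htH : (t : ℂ) ∈ rightHalfPlane := by simpa using ht
  have hz := mapsTo_halfPlaneToDisk h1 htH
  have hdist := norm_halfPlaneToDisk_one_ofReal_sub_one ht.le
  have hz1 : halfPlaneToDisk 1 t ≠ 1 := ne_one_of_norm_lt_one (mem_ball_zero_iff.1 hz)
  have hPt := norm_diskToHalfPlane_one_sub_le hz1 (hbound _ hz) (by rw [hdist]; exact ht_small.le)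
  rw [diskToHalfPlane_halfPlaneToDisk h1 htH.le, hdist] at hPt
  rw [norm_mul, norm_real, Real.norm_of_nonneg ht.le]
  calc t * ‖_‖ ≤ t * (4 * C * (2 / (t + 1)) ^ 2) := by gcongr
    _ ≤ 16 * C / t := by
      rw [le_div_iff₀ ht]
      have : t ^ 2 ≤ (t + 1) ^ 2 := by nlinarith
      field_simp
      nlinarith

theorem burns_krantz_general
    (φ : ℂ → ℂ) (hφ : DifferentiableOn ℂ φ (ball (0 : ℂ) 1))
    (hmap : ∀ z ∈ ball (0 : ℂ) 1, ‖φ z‖ < 1)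
    (C : ℝ)
    (hbound : ∀ z ∈ ball (0 : ℂ) 1, ‖φ z - z‖ ≤ C * ‖z - 1‖ ^ 4) :
    ∀ z ∈ ball (0 : ℂ) 1, φ z = z := by
  have h1 := one_mem_rightHalfPlane
  set P : ℂ → ℂ := diskToHalfPlane 1 ∘ φ ∘ halfPlaneToDisk 1
  have hφ_maps : MapsTo φ (ball 0 1) (ball 0 1) := fun z hz => mem_ball_zero_iff.2 (hmap z hz)
  have hP_maps : MapsTo P rightHalfPlane rightHalfPlane :=
    ((mapsTo_diskToHalfPlane h1).comp hφ_maps).comp (mapsTo_halfPlaneToDisk h1)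
  have hP : DifferentiableOn ℂ P rightHalfPlane :=
    (differentiableOn_diskToHalfPlane 1).comp
      (hφ.comp ((differentiableOn_halfPlaneToDisk h1).mono
        rightHalfPlane_subset_re_nonneg) (mapsTo_halfPlaneToDisk h1))
      (hφ_maps.comp (mapsTo_halfPlaneToDisk h1))
  have hdefect : Tendsto (fun t : ℝ => (t : ℂ) * (P t - t)) atTop (𝓝 0) :=
    tendsto_mul_diskToHalfPlane_sub hbound
  have hP_div : Tendsto (fun t : ℝ => P t / t) atTop (𝓝 1) := by
    refine (by simpa using (hdefect.mul (tendsto_ofReal_inv_atTop_zero.pow 2)).const_add 1 :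
      Tendsto (fun t : ℝ => 1 + (t : ℂ) * (P t - t) * (t : ℂ)⁻¹ ^ 2) atTop (𝓝 1)).congr' ?_
    filter_upwards [eventually_ne_atTop 0] with t ht
    have ht0 : (t : ℂ) ≠ 0 := ofReal_ne_zero.2 ht
    field_simp
    ring
  have hP_id : EqOn (fun w => P w - w) 0 rightHalfPlane :=
    eqOn_zero_of_re_nonneg_of_tendsto_mul (hP.sub differentiableOn_id)
      (fun w hw => by simpa using re_le_re_map_of_tendsto_div hP hP_maps hP_div hw) hdefect
  intro z hz
  have hz1 := ne_one_of_norm_lt_one (mem_ball_zero_iff.1 hz)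
  have hPz : P (diskToHalfPlane 1 z) = diskToHalfPlane 1 z :=
    sub_eq_zero.1 (hP_id (mapsTo_diskToHalfPlane h1 hz))
  simp only [P, Function.comp_apply, halfPlaneToDisk_diskToHalfPlane h1 hz1]
    at hPz
  rw [← halfPlaneToDisk_diskToHalfPlane h1 (ne_one_of_norm_lt_one (hmap z hz)),
    hPz, halfPlaneToDisk_diskToHalfPlane h1 hz1]

/-- Burns–Krantz boundary rigidity theorem. -/
theorem burns_krantz
    (φ : ℂ → ℂ) (hφ : DifferentiableOn ℂ φ (ball (0 : ℂ) 1))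
    (hmap : ∀ z ∈ ball (0 : ℂ) 1, ‖φ z‖ < 1)
    (C : ℝ) (hC : 0 < C)
    (hbound : ∀ z ∈ ball (0 : ℂ) 1, ‖φ z - z‖ ≤ C * ‖z - 1‖ ^ 4) :
    ∀ z ∈ ball (0 : ℂ) 1, φ z = z :=
  burns_krantz_general φ hφ hmap C hbound
end
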